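/- Let X be a nonempty finite set, P : X × X → ℝ a row-stochastic matrix, γ ∈ [0,1), R : X → ℝ, μ : X → ℝ with μ ≥ 0 and ∑_x μ(x) = 1, dD : X → ℝ with dD(x) > 0 for all x, α_ζ > 0, α_R ∈ ℝ, and f₂ : ℝ → ℝ convex and differentiable. With the dual-regularized Lagrangian L(ζ, Q) := (1−γ) ∑_x μ(x) Q(x) + ∑_x dD(x) ζ(x) (α_R R(x) + γ (P Q)(x) − Q(x)) − α_ζ ∑_x dD(x) f₂(ζ(x)), and with ζ*(x) := dπ(x)/dD(x) and Q* := α_R Qπ − α_ζ (I − γP)^{-1} (f₂' ∘ ζ*), the saddle value equals L(ζ*, Q*) = α_R ∑_x dπ(x) R(x) − α_ζ ∑_x dD(x) f₂(dπ(x)/dD(x)), i.e. α_R·ρ(π) minus α_ζ times the f-divergence D_f(dπ‖dD) := ∑_x dD(x) f₂(dπ(x)/dD(x)). -/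

import Mathlib

/-- The dual-regularized Lagrangian
`L(ζ, Q) = (1-γ)⟨μ, Q⟩ + ∑ dD·ζ·(α_R R + γ P Q - Q) - α_ζ ∑ dD·f₂(ζ)`. -/
def dualRegLagrangian {X : Type*} [Fintype X] (P : X → X → ℝ) (γ : ℝ)
    (R μ dD : X → ℝ) (αζ αR : ℝ) (f₂ : ℝ → ℝ) (ζ Q : X → ℝ) : ℝ :=
  (1 - γ) * (∑ x, μ x * Q x) +
    (∑ x, dD x * ζ x * (αR * R x + γ * (∑ y, P x y * Q y) - Q x)) -
    αζ * ∑ x, dD x * f₂ (ζ x)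

/-! At `ζ* = dπ/dD` the weights `dD ζ*` are exactly `dπ`, and `dπ` satisfies the flow equation
`dπ = (1-γ)μ + γPᵀdπ`. Pairing that equation with any `Q` shows that the `Q`-dependent part
`(1-γ)⟨μ, Q⟩ + ⟨dπ, γPQ - Q⟩` of the Lagrangian vanishes, so `L(ζ*, Q) = α_R⟨dπ, R⟩ - α_ζ D_f`
for every `Q`, in particular for `Q*`. -/

open Finset

theorem sum_transpose_mulVec_mul {X : Type*} [Fintype X] (P : X → X → ℝ) (d Q : X → ℝ) :
    ∑ x, (∑ y, P y x * d y) * Q x = ∑ x, d x * ∑ y, P x y * Q y := by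
  simp only [sum_mul, mul_sum]
  rw [sum_comm]
  exact sum_congr rfl fun x _ => sum_congr rfl fun y _ => by ring

theorem one_sub_mul_sum_mul_eq_of_flow {X : Type*} [Fintype X] (P : X → X → ℝ) (γ : ℝ)
    (μ d Q : X → ℝ) (hd : ∀ x, d x = (1 - γ) * μ x + γ * ∑ y, P y x * d y) :
    (1 - γ) * ∑ x, μ x * Q x = ∑ x, d x * (Q x - γ * ∑ y, P x y * Q y) := by
  calc (1 - γ) * ∑ x, μ x * Q x
      = ∑ x, d x * Q x - γ * ∑ x, (∑ y, P y x * d y) * Q x := by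
        rw [mul_sum, mul_sum, ← sum_sub_distrib]
        exact sum_congr rfl fun x _ => by linear_combination (-Q x) * hd x
    _ = ∑ x, d x * (Q x - γ * ∑ y, P x y * Q y) := by
        rw [sum_transpose_mulVec_mul, mul_sum, ← sum_sub_distrib]
        exact sum_congr rfl fun x _ => by ring

theorem dualRegLagrangian_eq_of_flow {X : Type*} [Fintype X] (P : X → X → ℝ) (γ : ℝ)
    (R μ dD : X → ℝ) (αζ αR : ℝ) (f₂ : ℝ → ℝ) (ζ d Q : X → ℝ)
    (hζ : ∀ x, dD x * ζ x = d x) (hd : ∀ x, d x = (1 - γ) * μ x + γ * ∑ y, P y x * d y) :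
    dualRegLagrangian P γ R μ dD αζ αR f₂ ζ Q =
      αR * (∑ x, d x * R x) - αζ * ∑ x, dD x * f₂ (ζ x) := by
  simp only [dualRegLagrangian, one_sub_mul_sum_mul_eq_of_flow P γ μ d Q hd, hζ,
    ← sum_add_distrib, mul_sum]
  congr 1
  exact sum_congr rfl fun x _ => by ring

theorem stmt_8_general {X : Type*} [Fintype X]
    (P : X → X → ℝ)
    (γ : ℝ)
    (R : X → ℝ) (μ : X → ℝ)
    (dD : X → ℝ) (hdD : ∀ x, 0 < dD x)
    (αζ : ℝ) (αR : ℝ)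
    (f₂ : ℝ → ℝ)
    (dπ : X → ℝ) (hdπ : ∀ x, dπ x = (1 - γ) * μ x + γ * ∑ y, P y x * dπ y)
    (ζs : X → ℝ) (hζs : ∀ x, ζs x = dπ x / dD x)
    (Qs : X → ℝ) :
    dualRegLagrangian P γ R μ dD αζ αR f₂ ζs Qs =
      αR * (∑ x, dπ x * R x) - αζ * ∑ x, dD x * f₂ (dπ x / dD x) := by
  have hweights : ∀ x, dD x * ζs x = dπ x := fun x => by
    rw [hζs, mul_div_cancel₀ _ (hdD x).ne']
  simp only [dualRegLagrangian_eq_of_flow P γ R μ dD αζ αR f₂ ζs dπ Qs hweights hdπ, hζs]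

/-- The saddle value of the dual-regularized Lagrangian at
`ζ* = dπ/dD`, `Q* = α_R Qπ - α_ζ (I - γP)⁻¹(f₂' ∘ ζ*)` equals
`α_R · ρ(π) - α_ζ · D_f(dπ ‖ dD)`. -/
theorem stmt_8 {X : Type*} [Fintype X] [Nonempty X]
    (P : X → X → ℝ) (hPnonneg : ∀ x y, 0 ≤ P x y) (hProw : ∀ x, ∑ y, P x y = 1)
    (γ : ℝ) (hγ0 : 0 ≤ γ) (hγ1 : γ < 1)
    (R : X → ℝ) (μ : X → ℝ) (hμnonneg : ∀ x, 0 ≤ μ x) (hμsum : ∑ x, μ x = 1)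
    (dD : X → ℝ) (hdD : ∀ x, 0 < dD x)
    (αζ : ℝ) (hαζ : 0 < αζ) (αR : ℝ)
    (f₂ : ℝ → ℝ) (hf₂conv : ConvexOn ℝ Set.univ f₂) (hf₂diff : Differentiable ℝ f₂)
    (Qπ : X → ℝ) (hQπ : ∀ x, Qπ x = R x + γ * ∑ y, P x y * Qπ y)
    (dπ : X → ℝ) (hdπ : ∀ x, dπ x = (1 - γ) * μ x + γ * ∑ y, P y x * dπ y)
    (ζs : X → ℝ) (hζs : ∀ x, ζs x = dπ x / dD x)
    (Qs : X → ℝ)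
    (hQs : ∀ x, Qs x = αR * R x - αζ * deriv f₂ (ζs x) + γ * ∑ y, P x y * Qs y) :
    dualRegLagrangian P γ R μ dD αζ αR f₂ ζs Qs =
      αR * (∑ x, dπ x * R x) - αζ * ∑ x, dD x * f₂ (dπ x / dD x) :=
  stmt_8_general P γ R μ dD hdD αζ αR f₂ dπ hdπ ζs hζs Qs
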